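/- arXiv:2510.05286 — 3 statements merged into one kernel-verified Lean document; each statement's English description precedes it below -/
import Mathlib

section
/- Let f : ℝⁿ → ℝⁿ be continuously differentiable and S = diag(s) a signature matrix with associated orthant order z₁ ≤_S z₂ ⟺ S(z₂ − z₁) ≥ 0 componentwise. If S (∂f/∂z)(z) S ≥ 0 entrywise for all z ∈ ℝⁿ, then f is monotone with respect to ≤_S: z₁ ≤_S z₂ implies f(z₁) ≤_S f(z₂). -/
open Matrix BigOperators

/-! Along the segment from `z₁` to `z₂`, the mean value theorem writes `sᵢ (fᵢ z₂ - fᵢ z₁)` as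
`sᵢ (J (z₂ - z₁))ᵢ` for the Jacobian `J` at some point. Since `s² = 1`, each term of that sum
factors as `(sᵢ Jᵢⱼ sⱼ) (sⱼ (z₂ - z₁)ⱼ)`, a product of two nonnegative numbers. -/

theorem LinearMap.signed_apply_nonneg {ι κ : Type*} [Fintype ι] [DecidableEq ι]
    (L : (ι → ℝ) →ₗ[ℝ] (κ → ℝ)) {σ : ι → ℝ} {τ : κ → ℝ} (hσ : ∀ j, σ j = 1 ∨ σ j = -1)
    (hL : ∀ i j, 0 ≤ τ i * L (Pi.single j 1) i * σ j) {v : ι → ℝ} (hv : ∀ j, 0 ≤ σ j * v j)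
    (i : κ) : 0 ≤ τ i * L v i := by
  rw [pi_eq_sum_univ' v, map_sum, Finset.sum_apply, Finset.mul_sum]
  refine Finset.sum_nonneg fun j _ => ?_
  have hσσ : σ j * σ j = 1 := by rcases hσ j with h | h <;> simp [h]
  have key : τ i * L (v j • Pi.single j 1) i
      = (τ i * L (Pi.single j 1) i * σ j) * (σ j * v j) := by
    simp only [map_smul, Pi.smul_apply, smul_eq_mul]
    linear_combination (-(τ i * L (Pi.single j 1) i * v j)) * hσσ
  rw [key]
  exact mul_nonneg (hL i j) (hv j)

theorem le_of_fderiv_apply_sub_nonneg {E : Type*} [NormedAddCommGroup E] [NormedSpace ℝ E]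
    {g : E → ℝ} (hg : Differentiable ℝ g) {x y : E} (h : ∀ z, 0 ≤ fderiv ℝ g z (y - x)) :
    g x ≤ g y := by
  obtain ⟨z, -, hz⟩ := domain_mvt (fun z _ => (hg z).hasFDerivAt.hasFDerivWithinAt)
    convex_univ (Set.mem_univ x) (Set.mem_univ y)
  linarith [h z]

theorem jacobian_balance_implies_monotone {n : ℕ}
    (f : (Fin n → ℝ) → (Fin n → ℝ)) (hf : ContDiff ℝ 1 f)
    (s : Fin n → ℝ) (hs : ∀ i, s i = 1 ∨ s i = -1)
    (hJac : ∀ z : Fin n → ℝ, ∀ i j, 0 ≤ s i * (fderiv ℝ f z (Pi.single j 1) i) * s j) :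
    ∀ z₁ z₂ : Fin n → ℝ, (∀ i, 0 ≤ s i * (z₂ i - z₁ i)) →
      ∀ i, 0 ≤ s i * (f z₂ i - f z₁ i) := by
  intro z₁ z₂ h12 i
  have hdiff : Differentiable ℝ f := hf.differentiable one_ne_zero
  have hcomp : ∀ z, HasFDerivAt (fun z => s i * f z i)
      (s i • (ContinuousLinearMap.proj i ∘L fderiv ℝ f z)) z := fun z =>
    (((ContinuousLinearMap.proj i).hasFDerivAt.comp z (hdiff z).hasFDerivAt)).const_mul (s i)
  have hmono : s i * f z₁ i ≤ s i * f z₂ i := by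
    refine le_of_fderiv_apply_sub_nonneg (fun z => (hcomp z).differentiableAt) fun z => ?_
    rw [(hcomp z).fderiv]
    exact (fderiv ℝ f z).toLinearMap.signed_apply_nonneg hs (hJac z) h12 i
  linarith [mul_sub (s i) (f z₂ i) (f z₁ i)]
end

section
/- IO monotonicity of a deep network from structural balance: let φ = g_h ∘ … ∘ g₁ with g_ℓ(z) = σ_ℓ(W^{(ℓ)} z + b^{(ℓ)}), where each σ_ℓ acts componentwise and is nondecreasing in each component. Suppose there exist signature matrices S^{(0)}, S^{(1)}, …, S^{(h)} such that S^{(ℓ)} W^{(ℓ)} S^{(ℓ−1)} ≥ 0 entrywise for every ℓ. Then φ is IO monotone: x₁ ≤_{S^{(0)}} x₂ implies φ(x₁) ≤_{S^{(h)}} φ(x₂). -/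
open BigOperators

theorem deep_network_IO_monotone_of_structural_balance
    (h : ℕ) (n : ℕ → ℕ)
    (W : (ℓ : ℕ) → Matrix (Fin (n (ℓ + 1))) (Fin (n ℓ)) ℝ)
    (b : (ℓ : ℕ) → Fin (n (ℓ + 1)) → ℝ)
    (σ : (ℓ : ℕ) → Fin (n (ℓ + 1)) → ℝ → ℝ)
    (hσ : ∀ ℓ i, Monotone (σ ℓ i))
    (s : (ℓ : ℕ) → Fin (n ℓ) → ℝ)
    (hs : ∀ ℓ i, s ℓ i = 1 ∨ s ℓ i = -1)
    (hbal : ∀ ℓ, ℓ < h → ∀ i j, 0 ≤ s (ℓ + 1) i * W ℓ i j * s ℓ j)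
    (z z' : (ℓ : ℕ) → Fin (n ℓ) → ℝ)
    (hz : ∀ ℓ, ℓ < h → ∀ i, z (ℓ + 1) i = σ ℓ i (∑ j, W ℓ i j * z ℓ j + b ℓ i))
    (hz' : ∀ ℓ, ℓ < h → ∀ i, z' (ℓ + 1) i = σ ℓ i (∑ j, W ℓ i j * z' ℓ j + b ℓ i))
    (hx : ∀ i, 0 ≤ s 0 i * (z' 0 i - z 0 i)) :
    ∀ i, 0 ≤ s h i * (z' h i - z h i) := by
  suffices H : ∀ ℓ, ℓ ≤ h → ∀ i, 0 ≤ s ℓ i * (z' ℓ i - z ℓ i) from H h le_rfl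
  intro ℓ
  induction ℓ with
  | zero => intro _ i; exact hx i
  | succ ℓ ih =>
    intro hlt i
    have hℓh : ℓ < h := Nat.lt_of_succ_le hlt
    have ihℓ := ih (Nat.le_of_lt hℓh)
    -- s (ℓ+1) i times preactivation difference is nonneg
    have hpre : 0 ≤ s (ℓ+1) i * (∑ j, W ℓ i j * z' ℓ j - ∑ j, W ℓ i j * z ℓ j) := by
      rw [← Finset.sum_sub_distrib, Finset.mul_sum]
      apply Finset.sum_nonneg
      intro j _
      have h1 := hbal ℓ hℓh i j
      have h2 := ihℓ j
      have hsq : s ℓ j * s ℓ j = 1 := by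
        rcases hs ℓ j with e | e <;> rw [e] <;> ring
      have : s (ℓ+1) i * (W ℓ i j * z' ℓ j - W ℓ i j * z ℓ j)
          = (s (ℓ+1) i * W ℓ i j * s ℓ j) * (s ℓ j * (z' ℓ j - z ℓ j)) := by
        have : (s (ℓ+1) i * W ℓ i j * s ℓ j) * (s ℓ j * (z' ℓ j - z ℓ j))
            = (s ℓ j * s ℓ j) * (s (ℓ+1) i * (W ℓ i j * z' ℓ j - W ℓ i j * z ℓ j)) := by ring
        rw [this, hsq, one_mul]
      rw [this]
      exact mul_nonneg h1 h2
    rw [hz ℓ hℓh i, hz' ℓ hℓh i]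
    rcases hs (ℓ+1) i with e | e
    · rw [e, one_mul] at hpre ⊢
      have : ∑ j, W ℓ i j * z ℓ j ≤ ∑ j, W ℓ i j * z' ℓ j := by linarith
      have := hσ ℓ i (by linarith : ∑ j, W ℓ i j * z ℓ j + b ℓ i ≤ ∑ j, W ℓ i j * z' ℓ j + b ℓ i)
      linarith
    · rw [e] at hpre ⊢
      have : ∑ j, W ℓ i j * z' ℓ j ≤ ∑ j, W ℓ i j * z ℓ j := by nlinarith
      have := hσ ℓ i (by linarith : ∑ j, W ℓ i j * z' ℓ j + b ℓ i ≤ ∑ j, W ℓ i j * z ℓ j + b ℓ i)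
      nlinarith
end

section
/- Single-spin energy decrease step: let A_u ∈ ℝ^{n×n} be symmetric with zero diagonal, S = diag(s) a signature matrix, and suppose the i-th row sum of S A_u S is negative: (S A_u S 𝟙)ᵢ < 0. Let S' be obtained from S by flipping sᵢ to −sᵢ. Then 𝟙ᵀ S' A_u S' 𝟙 > 𝟙ᵀ S A_u S 𝟙; equivalently, the energy e(s') < e(s), where e(s) = ½(1 − α 𝟙ᵀ S A_u S 𝟙) with α = 1/Σ_{i,j}|A_u|_{ij}. -/
open BigOperators

theorem single_spin_flip_decreases_energy {n : ℕ}
    (A : Matrix (Fin n) (Fin n) ℝ) (hsymm : A.IsSymm) (hdiag : ∀ i, A i i = 0)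
    (s : Fin n → ℝ) (hs : ∀ i, s i = 1 ∨ s i = -1)
    (i : Fin n) (hneg : (∑ j, s i * A i j * s j) < 0) :
    (∑ k, ∑ j, s k * A k j * s j) <
      (∑ k, ∑ j, (Function.update s i (-(s i))) k * A k j *
        (Function.update s i (-(s i))) j) ∧
    (1 - (1 / ∑ k, ∑ j, |A k j|) *
        ∑ k, ∑ j, (Function.update s i (-(s i))) k * A k j *
          (Function.update s i (-(s i))) j) / 2 <
      (1 - (1 / ∑ k, ∑ j, |A k j|) * ∑ k, ∑ j, s k * A k j * s j) / 2 := by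
  set s' := Function.update s i (-(s i)) with hs'
  have hterm : ∀ k j, s' k * A k j * s' j =
      s k * A k j * s j - (if k = i then 2*(s k * A k j * s j) else 0)
      - (if j = i then 2*(s k * A k j * s j) else 0)
      + (if k = i then (if j = i then 4*(s k * A k j * s j) else 0) else 0) := by
    intro k j
    by_cases hk : k = i <;> by_cases hj : j = i <;>
      simp [hs', Function.update_apply, hk, hj] <;> ring
  have hrow : ∀ k, (∑ j, s' k * A k j * s' j) =
      (∑ j, s k * A k j * s j)
      - (if k = i then 2 * ∑ j, s k * A k j * s j else 0)
      - 2 * (s k * A k i * s i)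
      + (if k = i then 4 * (s i * A i i * s i) else 0) := by
    intro k
    simp only [hterm, Finset.sum_add_distrib, Finset.sum_sub_distrib]
    rw [Finset.sum_ite_eq' Finset.univ i (fun j => 2*(s k * A k j * s j))]
    by_cases hk : k = i <;> simp [hk, Finset.mul_sum]
  have hcol : (∑ k, s k * A k i * s i) = ∑ j, s i * A i j * s j := by
    refine Finset.sum_congr rfl fun k _ => ?_
    have : A k i = A i k := by
      have := congrFun (congrFun hsymm i) k
      simpa [Matrix.transpose_apply] using this
    rw [this]; ring
  have key : (∑ k, ∑ j, s' k * A k j * s' j) =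
      (∑ k, ∑ j, s k * A k j * s j) - 4 * ∑ j, s i * A i j * s j := by
    simp only [hrow, Finset.sum_add_distrib, Finset.sum_sub_distrib]
    rw [Finset.sum_ite_eq' Finset.univ i (fun k => 2 * ∑ j, s k * A k j * s j),
        Finset.sum_ite_eq' Finset.univ i (fun _ => 4 * (s i * A i i * s i))]
    have h2 : (∑ k, 2 * (s k * A k i * s i)) = 2 * ∑ j, s i * A i j * s j := by
      rw [← Finset.mul_sum, hcol]
    simp only [Finset.mem_univ, if_true, hdiag i, h2]
    ring
  have hlt : (∑ k, ∑ j, s k * A k j * s j) < ∑ k, ∑ j, s' k * A k j * s' j := by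
    rw [key]; linarith
  refine ⟨hlt, ?_⟩
  have hT : (0:ℝ) < ∑ k, ∑ j, |A k j| := by
    rcases Finset.exists_lt_of_sum_lt (by simpa using hneg.trans_le (le_refl _) :
        (∑ j, s i * A i j * s j) < ∑ j, (0:ℝ)) with ⟨j, _, hj⟩
    have hAij : A i j ≠ 0 := by
      intro h; rw [h] at hj; simp at hj
    have h1 : (0:ℝ) < ∑ j, |A i j| :=
      Finset.sum_pos' (fun _ _ => abs_nonneg _) ⟨j, Finset.mem_univ j, abs_pos.mpr hAij⟩
    refine lt_of_lt_of_le h1 (Finset.single_le_sum (f := fun k => ∑ j, |A k j|)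
      (fun _ _ => Finset.sum_nonneg fun _ _ => abs_nonneg _) (Finset.mem_univ i))
  have hα : (0:ℝ) < 1 / ∑ k, ∑ j, |A k j| := by positivity
  have := mul_lt_mul_of_pos_left hlt hα
  linarith
end
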